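/- Let D' be a square matrix over F, F an invertible matrix of the same size, and D^φ = F^{-1} D'. Suppose R' = D' V' and R^φ = D^φ V^φ are reduced matrices with V' and V^φ full-rank upper-triangular. Then for every column index j, the j-th column of R^φ is zero if and only if the j-th column of R' is zero. -/

import Mathlib

open Matrix

/-- The `j`-th column of a matrix. -/
def matCol {F : Type*} [Field F] {n m : ℕ} (X : Matrix (Fin n) (Fin m) F) (j : Fin m) :
    Fin n → F :=
  fun i => X i j

open Classical in
/-- The pivot of a column vector: the largest index at which it has a nonzero entry
(`⊥` for the zero vector). -/
noncomputable def pivFin {F : Type*} [Field F] {n : ℕ} (v : Fin n → F) : WithBot (Fin n) :=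
  (Finset.univ.filter fun i => v i ≠ 0).max

/-- A matrix is reduced if no two nonzero columns have the same pivot. -/
def IsReducedMat {F : Type*} [Field F] {n m : ℕ} (X : Matrix (Fin n) (Fin m) F) : Prop :=
  ∀ j k : Fin m, matCol X j ≠ 0 → matCol X k ≠ 0 →
    pivFin (matCol X j) = pivFin (matCol X k) → j = k

/-- Upper-triangular square matrix. -/
def UpperTri {F : Type*} [Field F] {n : ℕ} (V : Matrix (Fin n) (Fin n) F) : Prop :=
  ∀ i j : Fin n, j < i → V i j = 0

section Aux
variable {F : Type*} [Field F] {n : ℕ}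

lemma pivFin_eq_bot_iff (v : Fin n → F) : pivFin v = ⊥ ↔ v = 0 := by
  classical
  unfold pivFin
  rw [Finset.max_eq_bot, Finset.filter_eq_empty_iff]
  constructor
  · intro h; funext i; by_contra hi; exact h (Finset.mem_univ i) hi
  · intro h i _; simp [h]

lemma apply_ne_zero_of_pivFin (v : Fin n → F) (p : Fin n) (h : pivFin v = ↑p) : v p ≠ 0 := by
  classical
  have := Finset.mem_of_max h
  simpa using this

lemma le_pivFin (v : Fin n → F) (p : Fin n) (h : v p ≠ 0) : (↑p : WithBot (Fin n)) ≤ pivFin v := by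
  classical
  exact Finset.le_max (by simp [h])

/-- Nonzero vectors with pairwise distinct pivots are linearly independent. -/
lemma li_of_pivots {ι : Type*} (v : ι → Fin n → F) (h0 : ∀ i, v i ≠ 0)
    (hp : ∀ i k, pivFin (v i) = pivFin (v k) → i = k) :
    LinearIndependent F v := by
  classical
  rw [linearIndependent_iff']
  intro s g hsum i hi
  by_contra hgi
  set t := s.filter (fun i => g i ≠ 0) with ht
  have hti : i ∈ t := Finset.mem_filter.2 ⟨hi, hgi⟩
  obtain ⟨i₀, hi₀t, hmax⟩ := t.exists_max_image (fun i => pivFin (v i)) ⟨i, hti⟩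
  have hi₀s : i₀ ∈ s := (Finset.mem_filter.1 hi₀t).1
  have hgi₀ : g i₀ ≠ 0 := (Finset.mem_filter.1 hi₀t).2
  have hnb : pivFin (v i₀) ≠ ⊥ := fun h => h0 i₀ ((pivFin_eq_bot_iff _).1 h)
  obtain ⟨p, hp0⟩ := WithBot.ne_bot_iff_exists.1 hnb
  have hvp : v i₀ p ≠ 0 := apply_ne_zero_of_pivFin _ _ hp0.symm
  have heval : (∑ k ∈ s, g k • v k) p = 0 := by rw [hsum]; rfl
  rw [Finset.sum_apply] at heval
  have hz : ∀ k ∈ s, k ≠ i₀ → (g k • v k) p = 0 := by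
    intro k hks hki₀
    by_cases hgk : g k = 0
    · simp [hgk]
    · have hkt : k ∈ t := Finset.mem_filter.2 ⟨hks, hgk⟩
      have hlt : pivFin (v k) < (↑p : WithBot (Fin n)) := by
        refine lt_of_le_of_ne ?_ ?_
        · rw [hp0]; exact hmax k hkt
        · intro h; exact hki₀ (hp k i₀ (h.trans hp0))
      have : v k p = 0 := by
        by_contra hne
        exact absurd (le_pivFin _ _ hne) (not_le.2 hlt)
      simp [this]
  rw [Finset.sum_eq_single_of_mem i₀ hi₀s hz] at heval
  exact hvp (by simpa [hgi₀] using heval)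

lemma matCol_mul (D V : Matrix (Fin n) (Fin n) F) (j : Fin n) :
    matCol (D * V) j = ∑ i, V i j • matCol D i := by
  funext x
  simp [matCol, Matrix.mul_apply, Finset.sum_apply, mul_comm]

lemma matCol_mul_tri (D V : Matrix (Fin n) (Fin n) F) (hV : UpperTri V) (j : Fin n) :
    matCol (D * V) j = V j j • matCol D j + ∑ i ∈ Finset.Iio j, V i j • matCol D i := by
  rw [matCol_mul]
  rw [← Finset.sum_subset (Finset.subset_univ (Finset.Iic j))
    (fun x _ hx => by rw [hV x j (by simpa using hx), zero_smul])]
  rw [← Finset.Iio_insert, Finset.sum_insert (by simp)]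

lemma diag_ne_zero (V : Matrix (Fin n) (Fin n) F) (hV : UpperTri V) (hVd : IsUnit V.det)
    (i : Fin n) : V i i ≠ 0 := by
  have hbt : V.BlockTriangular id := fun a b h => hV a b h
  rw [Matrix.det_of_upperTriangular hbt] at hVd
  intro h
  exact hVd.ne_zero (Finset.prod_eq_zero (Finset.mem_univ i) h)

lemma colD_mem_span (D R V : Matrix (Fin n) (Fin n) F) (hR : R = D * V) (hV : UpperTri V)
    (hd : ∀ i, V i i ≠ 0) (i : Fin n) :
    matCol D i ∈ Submodule.span F (matCol R '' {k | k ≤ i}) := by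
  suffices h : ∀ m : ℕ, ∀ i : Fin n, i.val < m →
      matCol D i ∈ Submodule.span F (matCol R '' {k | k ≤ i}) from
    h (i.val + 1) i (Nat.lt_succ_self _)
  intro m
  induction m with
  | zero => intro i hi; exact absurd hi (Nat.not_lt_zero _)
  | succ m IH0 =>
    intro i hi
    have IH : ∀ k : Fin n, k < i → matCol D k ∈ Submodule.span F (matCol R '' {k' | k' ≤ k}) :=
      fun k hk => IH0 k (by omega)
    have heq := matCol_mul_tri D V hV i
    rw [← hR] at heq
    have hS : (∑ k ∈ Finset.Iio i, V k i • matCol D k) ∈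
        Submodule.span F (matCol R '' {k | k ≤ i}) := by
      refine Submodule.sum_mem _ (fun k hk => Submodule.smul_mem _ _ ?_)
      have hk' : k < i := Finset.mem_Iio.1 hk
      refine Submodule.span_mono (Set.image_mono ?_) (IH k hk')
      intro x hx
      exact le_trans hx hk'.le
    have hRi : matCol R i ∈ Submodule.span F (matCol R '' {k | k ≤ i}) :=
      Submodule.subset_span ⟨i, le_refl i, rfl⟩
    have h1 : V i i • matCol D i ∈ Submodule.span F (matCol R '' {k | k ≤ i}) := by
      have : V i i • matCol D i = matCol R i - ∑ k ∈ Finset.Iio i, V k i • matCol D k := by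
        rw [heq]; abel
      rw [this]
      exact Submodule.sub_mem _ hRi hS
    have := Submodule.smul_mem _ (V i i)⁻¹ h1
    rwa [smul_smul, inv_mul_cancel₀ (hd i), one_smul] at this

/-- Key lemma. -/
lemma key (D R V : Matrix (Fin n) (Fin n) F) (hR : R = D * V) (hV : UpperTri V)
    (hVd : IsUnit V.det) (hred : IsReducedMat R) (j : Fin n) :
    matCol R j = 0 ↔ matCol D j ∈ Submodule.span F (matCol D '' {i | i < j}) := by
  classical
  have hd := diag_ne_zero V hV hVd
  have heq := matCol_mul_tri D V hV j
  rw [← hR] at heq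
  constructor
  · intro hz
    have h1 : V j j • matCol D j = -∑ i ∈ Finset.Iio j, V i j • matCol D i := by
      rw [hz] at heq
      exact eq_neg_of_add_eq_zero_left heq.symm
    have h2 : V j j • matCol D j ∈ Submodule.span F (matCol D '' {i | i < j}) := by
      rw [h1]
      refine Submodule.neg_mem _ (Submodule.sum_mem _ (fun k hk => Submodule.smul_mem _ _ ?_))
      exact Submodule.subset_span ⟨k, Finset.mem_Iio.1 hk, rfl⟩
    have := Submodule.smul_mem _ (V j j)⁻¹ h2
    rwa [smul_smul, inv_mul_cancel₀ (hd j), one_smul] at this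
  · intro hm
    by_contra hnz
    -- spans of D-columns < j are contained in span of R-columns < j
    have hDR : Submodule.span F (matCol D '' {i | i < j}) ≤
        Submodule.span F (matCol R '' {i | i < j}) := by
      rw [Submodule.span_le]
      rintro x ⟨k, hk, rfl⟩
      simp only [Set.mem_setOf_eq] at hk
      refine Submodule.span_mono (Set.image_mono ?_) (colD_mem_span D R V hR hV hd k)
      intro y hy
      exact lt_of_le_of_lt hy hk
    have hRj : matCol R j ∈ Submodule.span F (matCol R '' {i | i < j}) := by
      rw [heq]
      refine Submodule.add_mem _ (Submodule.smul_mem _ _ (hDR hm))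
        (Submodule.sum_mem _ (fun k hk => Submodule.smul_mem _ _ ?_))
      refine Submodule.span_mono (Set.image_mono ?_) (colD_mem_span D R V hR hV hd k)
      intro y hy
      exact lt_of_le_of_lt hy (Finset.mem_Iio.1 hk)
    -- linear independence of nonzero columns
    set ι := {k : Fin n // matCol R k ≠ 0}
    have hli : LinearIndependent F (fun k : ι => matCol R k.1) :=
      li_of_pivots _ (fun k => k.2) (fun k l h => Subtype.ext (hred k.1 l.1 k.2 l.2 h))
    set s : Set ι := {k : ι | k.1 < j}
    have hnot : (⟨j, hnz⟩ : ι) ∉ s := by simp [s]; exact lt_irrefl j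
    have hsub : Submodule.span F (matCol R '' {i | i < j}) ≤
        Submodule.span F ((fun k : ι => matCol R k.1) '' s) := by
      rw [Submodule.span_le]
      rintro x ⟨k, hk, rfl⟩
      by_cases hz : matCol R k = 0
      · rw [hz]; exact Submodule.zero_mem _
      · exact Submodule.subset_span ⟨⟨k, hz⟩, hk, rfl⟩
    exact hli.notMem_span_image hnot (hsub hRj)

end Aux

theorem stmt13 {F : Type*} [Field F] {n : ℕ}
    (D' Fm Dφ R' V' Rφ Vφ : Matrix (Fin n) (Fin n) F)
    (hFm : IsUnit Fm.det)
    (hDφ : Dφ = Fm⁻¹ * D')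
    (hR' : R' = D' * V') (hRφ : Rφ = Dφ * Vφ)
    (hR'red : IsReducedMat R') (hRφred : IsReducedMat Rφ)
    (hV'ut : UpperTri V') (hV'unit : IsUnit V'.det)
    (hVφut : UpperTri Vφ) (hVφunit : IsUnit Vφ.det) :
    ∀ j : Fin n, matCol Rφ j = 0 ↔ matCol R' j = 0 := by
  intro j
  rw [key Dφ Rφ Vφ hRφ hVφut hVφunit hRφred j,
      key D' R' V' hR' hV'ut hV'unit hR'red j]
  -- transfer span membership through multiplication by Fm⁻¹
  have hinv1 : Fm * Fm⁻¹ = 1 := Matrix.mul_nonsing_inv Fm hFm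
  have hinv2 : Fm⁻¹ * Fm = 1 := Matrix.nonsing_inv_mul Fm hFm
  let e : (Fin n → F) ≃ₗ[F] (Fin n → F) :=
    LinearEquiv.ofLinear (Matrix.mulVecLin Fm⁻¹) (Matrix.mulVecLin Fm)
      (by rw [← Matrix.mulVecLin_mul, hinv2, Matrix.mulVecLin_one])
      (by rw [← Matrix.mulVecLin_mul, hinv1, Matrix.mulVecLin_one])
  have hcol : ∀ i : Fin n, matCol Dφ i = e (matCol D' i) := by
    intro i
    funext x
    simp [matCol, hDφ, Matrix.mul_apply, e, Matrix.mulVecLin, Matrix.mulVec, dotProduct]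
  have himg : matCol Dφ '' {i | i < j} = e '' (matCol D' '' {i | i < j}) := by
    rw [← Set.image_comp]
    exact Set.image_congr (fun i _ => hcol i)
  rw [hcol j, himg, ← LinearEquiv.coe_coe, ← Submodule.map_span]
  constructor
  · rintro ⟨y, hy, hey⟩
    rwa [← e.injective hey]
  · intro h
    exact ⟨_, h, rfl⟩
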